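/- arXiv:2310.07330 — 4 statements merged into one kernel-verified Lean document; each statement's English description precedes it below -/
import Mathlib

section
/- The objective Ψ is multiconvex and lies above its linear minorization in each block: for every index j, all f_1 ∈ H_1, …, f_J ∈ H_J and every f̃_j ∈ H_j, one has Ψ(f_1, …, f̃_j, …, f_J) ≥ Ψ(f_1, …, f_j, …, f_J) + ⟨G, f̃_j − f_j⟩, where G = 2 · Σ_{j'≠j} c_{jj'} · g'(⟨f_j, Σ_{jj'} f_{j'}⟩) · Σ_{jj'} f_{j'} is the partial gradient of Ψ with respect to the j-th block. -/
open scoped RealInnerProductSpace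
open Finset Topology Filter

/-- The FGCCA objective `Ψ(f₁, …, f_J) = Σ_{j≠j'} c_{jj'} g(⟨f_j, Σ_{jj'} f_{j'}⟩)`. -/
noncomputable def Psi {J : ℕ} (H : Fin J → Type*) [∀ j, NormedAddCommGroup (H j)]
    [∀ j, InnerProductSpace ℝ (H j)]
    (S : ∀ j j' : Fin J, H j' →L[ℝ] H j) (c : Fin J → Fin J → ℝ) (g : ℝ → ℝ)
    (f : ∀ j, H j) : ℝ :=
  ∑ j, ∑ j', if j = j' then 0 else c j j' * g ⟪f j, S j j' (f j')⟫

/-- The partial gradient `G = 2 Σ_{j'≠j} c_{jj'} g'(⟨f_j, Σ_{jj'} f_{j'}⟩) Σ_{jj'} f_{j'}`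
of the FGCCA objective with respect to the `j`-th block, evaluated with `j`-th block `fj`
and the other blocks given by `f0`. -/
noncomputable def gradG {J : ℕ} (H : Fin J → Type*) [∀ j, NormedAddCommGroup (H j)]
    [∀ j, InnerProductSpace ℝ (H j)]
    (S : ∀ j j' : Fin J, H j' →L[ℝ] H j) (c : Fin J → Fin J → ℝ) (g' : ℝ → ℝ)
    (j : Fin J) (fj : H j) (f0 : ∀ j, H j) : H j :=
  (2 : ℝ) • ∑ j' ∈ univ.filter (fun j' => j' ≠ j),
    (c j j' * g' ⟪fj, S j j' (f0 j')⟫) • S j j' (f0 j')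

lemma tangent_le (g g' : ℝ → ℝ) (hg : ∀ x, HasDerivAt g (g' x) x)
    (hconv : ConvexOn ℝ Set.univ g) (x y : ℝ) :
    g x + g' x * (y - x) ≤ g y := by
  rcases lt_trichotomy x y with h | h | h
  · have hs := hconv.le_slope_of_hasDerivAt (Set.mem_univ x) (Set.mem_univ y) h (hg x)
    rw [slope_def_field] at hs
    have := (le_div_iff₀ (by linarith : (0:ℝ) < y - x)).mp hs
    linarith
  · simp [h]
  · have hs := hconv.slope_le_of_hasDerivAt (Set.mem_univ y) (Set.mem_univ x) h (hg x)
    rw [slope_def_field] at hs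
    have := (div_le_iff₀ (by linarith : (0:ℝ) < x - y)).mp hs
    linarith

theorem stmt2 (J : ℕ) (hJ : 2 ≤ J) (H : Fin J → Type*)
    [∀ j, NormedAddCommGroup (H j)] [∀ j, InnerProductSpace ℝ (H j)]
    [∀ j, CompleteSpace (H j)]
    (S : ∀ j j' : Fin J, H j' →L[ℝ] H j)
    (hadj : ∀ j j', j ≠ j' → S j' j = ContinuousLinearMap.adjoint (S j j'))
    (c : Fin J → Fin J → ℝ) (hsym : ∀ j j', c j j' = c j' j)
    (hpos : ∀ j j', 0 ≤ c j j') (hdiag : ∀ j, c j j = 0)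
    (g : ℝ → ℝ) (g' : ℝ → ℝ) (hg : ∀ x, HasDerivAt g (g' x) x)
    (hconv : ConvexOn ℝ Set.univ g)
    (j : Fin J) (f : ∀ j, H j) (ftilde : H j) :
    Psi H S c g (Function.update f j ftilde) ≥
      Psi H S c g f + ⟪gradG H S c g' j (f j) f, ftilde - f j⟫ := by
  classical
  set u := Function.update f j ftilde with hu
  set d := ftilde - f j with hd
  set y : Fin J → ℝ := fun k => ⟪f j, S j k (f k)⟫ with hy
  set y' : Fin J → ℝ := fun k => ⟪ftilde, S j k (f k)⟫ with hy'
  have hu_ne : ∀ k, k ≠ j → u k = f k := fun k hk => Function.update_of_ne hk _ _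
  have hu_j : u j = ftilde := Function.update_self _ _ _
  -- the key identity for the objective difference
  have hPsi : Psi H S c g u - Psi H S c g f
      = ∑ k ∈ univ.erase j, 2 * c j k * (g (y' k) - g (y k)) := by
    unfold Psi
    rw [← Finset.sum_sub_distrib]
    simp only [← Finset.sum_sub_distrib]
    rw [← Finset.add_sum_erase _ _ (Finset.mem_univ j)]
    have hrow : (∑ k', ((if j = k' then 0 else c j k' * g ⟪u j, S j k' (u k')⟫)
          - (if j = k' then 0 else c j k' * g ⟪f j, S j k' (f k')⟫)))
        = ∑ k' ∈ univ.erase j, c j k' * (g (y' k') - g (y k')) := by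
      rw [← Finset.add_sum_erase _ _ (Finset.mem_univ j), if_pos rfl, if_pos rfl, sub_self, zero_add]
      refine Finset.sum_congr rfl fun k' hk' => ?_
      have hk'j : k' ≠ j := Finset.ne_of_mem_erase hk'
      rw [if_neg (fun h => hk'j h.symm), if_neg (fun h => hk'j h.symm), hu_j, hu_ne k' hk'j]
      ring
    have hcol : ∀ k ∈ univ.erase j,
        (∑ k', ((if k = k' then 0 else c k k' * g ⟪u k, S k k' (u k')⟫)
          - (if k = k' then 0 else c k k' * g ⟪f k, S k k' (f k')⟫)))
        = c j k * (g (y' k) - g (y k)) := by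
      intro k hk
      have hkj : k ≠ j := Finset.ne_of_mem_erase hk
      rw [Finset.sum_eq_single j]
      · rw [if_neg hkj, if_neg hkj, hu_ne k hkj, hu_j]
        have hS : S k j = ContinuousLinearMap.adjoint (S j k) := hadj j k (fun h => hkj h.symm)
        have h1 : ∀ x : H j, ⟪f k, S k j x⟫ = ⟪x, S j k (f k)⟫ := by
          intro x
          rw [hS, ContinuousLinearMap.adjoint_inner_right, real_inner_comm]
        rw [h1, h1, hsym k j]
        simp only [hy, hy']
        ring
      · intro k' _ hk'j
        by_cases hkk' : k = k'
        · rw [if_pos hkk', if_pos hkk', sub_self]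
        · rw [if_neg hkk', if_neg hkk', hu_ne k hkj, hu_ne k' hk'j, sub_self]
      · intro h; exact absurd (Finset.mem_univ j) h
    rw [hrow, Finset.sum_congr rfl hcol, ← Finset.sum_add_distrib]
    refine Finset.sum_congr rfl fun k _ => ?_
    ring
  -- the inner product term
  have hFilter : (univ.filter (fun j' => j' ≠ j)) = univ.erase j := Finset.filter_ne' _ _
  have hInner : ⟪gradG H S c g' j (f j) f, d⟫
      = ∑ k ∈ univ.erase j, 2 * c j k * (g' (y k) * (y' k - y k)) := by
    unfold gradG
    rw [hFilter, real_inner_smul_left, sum_inner]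
    rw [Finset.mul_sum]
    refine Finset.sum_congr rfl fun k _ => ?_
    rw [real_inner_smul_left]
    have h2 : ⟪S j k (f k), d⟫ = y' k - y k := by
      rw [real_inner_comm, hd, inner_sub_left]
    rw [h2]
    ring
  -- conclude
  rw [ge_iff_le, hd] at *
  have hmain : ∑ k ∈ univ.erase j, 2 * c j k * (g' (y k) * (y' k - y k))
      ≤ ∑ k ∈ univ.erase j, 2 * c j k * (g (y' k) - g (y k)) := by
    refine Finset.sum_le_sum fun k _ => ?_
    have ht := tangent_le g g' hg hconv (y k) (y' k)
    have hc : (0:ℝ) ≤ 2 * c j k := by linarith [hpos j k]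
    nlinarith
  linarith [hPsi ▸ hInner ▸ hmain]
end

section
/- (Monotone convergence of the FGCCA algorithm.) Let (f^s)_{s≥0} with f^s = (f_1^s, …, f_J^s), ‖f_j^s‖ = 1 for all j and s, be generated by cyclic block-coordinate updates: for each s ≥ 0 and each j = 1, …, J in increasing order, set G_j^s = 2 · Σ_{j'<j} c_{jj'} g'(⟨f_j^s, Σ_{jj'} f_{j'}^{s+1}⟩) · Σ_{jj'} f_{j'}^{s+1} + 2 · Σ_{j'>j} c_{jj'} g'(⟨f_j^s, Σ_{jj'} f_{j'}^{s}⟩) · Σ_{jj'} f_{j'}^{s}, assume G_j^s ≠ 0, and set f_j^{s+1} = G_j^s/‖G_j^s‖. Then the real sequence (Ψ(f^s))_{s≥0} is monotonically nondecreasing, bounded above, and therefore convergent. -/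
open scoped RealInnerProductSpace
open Finset Topology Filter

/-- The gradient used in the cyclic block-coordinate update of the FGCCA algorithm:
`G_j^s = 2 Σ_{j'<j} c_{jj'} g'(⟨f_j^s, Σ_{jj'} f_{j'}^{s+1}⟩) Σ_{jj'} f_{j'}^{s+1}
       + 2 Σ_{j'>j} c_{jj'} g'(⟨f_j^s, Σ_{jj'} f_{j'}^{s}⟩) Σ_{jj'} f_{j'}^{s}`. -/
noncomputable def Gstep {J : ℕ} (H : Fin J → Type*) [∀ j, NormedAddCommGroup (H j)]
    [∀ j, InnerProductSpace ℝ (H j)]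
    (S : ∀ j j' : Fin J, H j' →L[ℝ] H j) (c : Fin J → Fin J → ℝ) (g' : ℝ → ℝ)
    (f : ℕ → ∀ j, H j) (s : ℕ) (j : Fin J) : H j :=
  (2 : ℝ) • (∑ j' ∈ univ.filter (fun j' => j' < j),
      (c j j' * g' ⟪f s j, S j j' (f (s + 1) j')⟫) • S j j' (f (s + 1) j')) +
    (2 : ℝ) • ∑ j' ∈ univ.filter (fun j' => j < j'),
      (c j j' * g' ⟪f s j, S j j' (f s j')⟫) • S j j' (f s j')

/-- A convex differentiable function lies above its tangent lines. -/
lemma support_line {g g' : ℝ → ℝ} (hconv : ConvexOn ℝ Set.univ g)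
    (hg : ∀ x, HasDerivAt g (g' x) x) (x y : ℝ) :
    g x + g' x * (y - x) ≤ g y := by
  rcases lt_trichotomy x y with h | h | h
  · have := hconv.le_slope_of_hasDerivAt (Set.mem_univ x) (Set.mem_univ y) h (hg x)
    rw [slope_def_field] at this
    have h' : (0:ℝ) < y - x := by linarith
    rw [le_div_iff₀ h'] at this
    linarith
  · simp [h]
  · have := hconv.slope_le_of_hasDerivAt (Set.mem_univ y) (Set.mem_univ x) h (hg x)
    rw [slope_def_field] at this
    have h' : (0:ℝ) < x - y := by linarith
    rw [div_le_iff₀ h'] at this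
    linarith

/-- Decomposition of the FGCCA objective isolating block `j`. -/
lemma psi_decomp {J : ℕ} {H : Fin J → Type*} [∀ j, NormedAddCommGroup (H j)]
    [∀ j, InnerProductSpace ℝ (H j)] [∀ j, CompleteSpace (H j)]
    {S : ∀ j j' : Fin J, H j' →L[ℝ] H j}
    (hadj : ∀ j j', j ≠ j' → S j' j = ContinuousLinearMap.adjoint (S j j'))
    {c : Fin J → Fin J → ℝ} (hsym : ∀ j j', c j j' = c j' j)
    (g : ℝ → ℝ) (j : Fin J) (f : ∀ j, H j) :
    Psi H S c g f =
      (∑ a ∈ univ.erase j, ∑ b ∈ univ.erase j,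
        if a = b then 0 else c a b * g ⟪f a, S a b (f b)⟫) +
      2 * ∑ b ∈ univ.erase j, c j b * g ⟪f j, S j b (f b)⟫ := by
  classical
  have key : ∀ a : Fin J, a ≠ j → ⟪f a, S a j (f j)⟫ = ⟪f j, S j a (f a)⟫ := by
    intro a ha
    rw [hadj j a (Ne.symm ha), ContinuousLinearMap.adjoint_inner_right, real_inner_comm]
  have split : ∀ (F : Fin J → ℝ), ∑ b, F b = (∑ b ∈ univ.erase j, F b) + F j :=
    fun F => (Finset.sum_erase_add univ F (Finset.mem_univ j)).symm
  rw [Psi, split]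
  have h1 : ∑ a ∈ univ.erase j, ∑ b, (if a = b then 0 else c a b * g ⟪f a, S a b (f b)⟫) =
      (∑ a ∈ univ.erase j, ∑ b ∈ univ.erase j,
        if a = b then 0 else c a b * g ⟪f a, S a b (f b)⟫) +
      ∑ a ∈ univ.erase j, c j a * g ⟪f j, S j a (f a)⟫ := by
    rw [← Finset.sum_add_distrib]
    refine Finset.sum_congr rfl fun a ha => ?_
    have haj : a ≠ j := Finset.ne_of_mem_erase ha
    rw [split]
    congr 1
    rw [if_neg haj, key a haj, hsym a j]
  have h2 : ∑ b, (if j = b then 0 else c j b * g ⟪f j, S j b (f b)⟫) =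
      ∑ b ∈ univ.erase j, c j b * g ⟪f j, S j b (f b)⟫ := by
    rw [split, if_pos rfl, add_zero]
    refine Finset.sum_congr rfl fun b hb => ?_
    rw [if_neg (Ne.symm (Finset.ne_of_mem_erase hb))]
  rw [h1, h2]; ring

/-- Updating block `j` to the normalized partial gradient does not decrease the
block-`j` part of the objective. -/
lemma block_step {J : ℕ} {H : Fin J → Type*} [∀ j, NormedAddCommGroup (H j)]
    [∀ j, InnerProductSpace ℝ (H j)] [∀ j, CompleteSpace (H j)]
    {S : ∀ j j' : Fin J, H j' →L[ℝ] H j}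
    {c : Fin J → Fin J → ℝ} (hpos : ∀ j j', 0 ≤ c j j')
    {g : ℝ → ℝ} {g' : ℝ → ℝ} (hg : ∀ x, HasDerivAt g (g' x) x)
    (hconv : ConvexOn ℝ Set.univ g)
    (j : Fin J) (v u : H j) (w : ∀ b, H b)
    (hv : ‖v‖ = 1) (hG : gradG H S c g' j v w ≠ 0)
    (hu : u = ‖gradG H S c g' j v w‖⁻¹ • gradG H S c g' j v w) :
    ∑ b ∈ univ.erase j, c j b * g ⟪v, S j b (w b)⟫ ≤
    ∑ b ∈ univ.erase j, c j b * g ⟪u, S j b (w b)⟫ := by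
  classical
  set G := gradG H S c g' j v w with hGdef
  have hGe : G = (2:ℝ) • ∑ b ∈ univ.erase j,
      (c j b * g' ⟪v, S j b (w b)⟫) • S j b (w b) := by
    rw [hGdef, gradG, Finset.filter_ne']
  have hnG : (0:ℝ) < ‖G‖ := norm_pos_iff.mpr hG
  have huG : ⟪u, G⟫ = ‖G‖ := by
    rw [hu, real_inner_smul_left, real_inner_self_eq_norm_sq]
    field_simp
  have hvG : ⟪v, G⟫ ≤ ‖G‖ := by
    have := real_inner_le_norm v G
    rwa [hv, one_mul] at this
  have hposin : 0 ≤ ⟪u - v, G⟫ := by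
    rw [inner_sub_left, huG]; linarith
  have hE : ∑ b ∈ univ.erase j,
      (c j b * g' ⟪v, S j b (w b)⟫) * ⟪u - v, S j b (w b)⟫ = (1/2) * ⟪u - v, G⟫ := by
    rw [hGe, real_inner_smul_right, inner_sum]
    simp only [real_inner_smul_right]
    simp only [Finset.mul_sum]
    refine Finset.sum_congr rfl fun b _ => ?_
    ring
  have hsupp : ∀ b ∈ univ.erase j,
      c j b * g ⟪v, S j b (w b)⟫ +
        (c j b * g' ⟪v, S j b (w b)⟫) * ⟪u - v, S j b (w b)⟫ ≤
      c j b * g ⟪u, S j b (w b)⟫ := by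
    intro b _
    have h := support_line hconv hg ⟪v, S j b (w b)⟫ ⟪u, S j b (w b)⟫
    have h2 := mul_le_mul_of_nonneg_left h (hpos j b)
    rw [inner_sub_left]
    nlinarith [hpos j b]
  have h1 := Finset.sum_le_sum hsupp
  rw [Finset.sum_add_distrib, hE] at h1
  linarith

theorem stmt8 (J : ℕ) (hJ : 2 ≤ J) (H : Fin J → Type*)
    [∀ j, NormedAddCommGroup (H j)] [∀ j, InnerProductSpace ℝ (H j)]
    [∀ j, CompleteSpace (H j)]
    (S : ∀ j j' : Fin J, H j' →L[ℝ] H j)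
    (hadj : ∀ j j', j ≠ j' → S j' j = ContinuousLinearMap.adjoint (S j j'))
    (c : Fin J → Fin J → ℝ) (hsym : ∀ j j', c j j' = c j' j)
    (hpos : ∀ j j', 0 ≤ c j j') (hdiag : ∀ j, c j j = 0)
    (g : ℝ → ℝ) (g' : ℝ → ℝ) (hg : ∀ x, HasDerivAt g (g' x) x)
    (hconv : ConvexOn ℝ Set.univ g)
    (f : ℕ → ∀ j, H j) (hnorm : ∀ (s : ℕ) (j : Fin J), ‖f s j‖ = 1)
    (hGne : ∀ (s : ℕ) (j : Fin J), Gstep H S c g' f s j ≠ 0)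
    (hupd : ∀ (s : ℕ) (j : Fin J),
      f (s + 1) j = ‖Gstep H S c g' f s j‖⁻¹ • Gstep H S c g' f s j) :
    Monotone (fun s => Psi H S c g (f s)) ∧
    BddAbove (Set.range fun s => Psi H S c g (f s)) ∧
    ∃ L : ℝ, Tendsto (fun s => Psi H S c g (f s)) atTop (𝓝 L) := by
  classical
  -- Monotonicity via intermediate cyclic updates
  have hmono : Monotone (fun s => Psi H S c g (f s)) := by
    apply monotone_nat_of_le_succ
    intro s
    set h : ℕ → ∀ b, H b := fun k b => if (b : ℕ) < k then f (s + 1) b else f s b with hh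
    have h0 : h 0 = f s := by funext b; simp [hh]
    have hJfull : ∀ k, J ≤ k → h k = f (s + 1) := by
      intro k hk; funext b; simp [hh, lt_of_lt_of_le b.isLt hk]
    have hstep : ∀ k, Psi H S c g (h k) ≤ Psi H S c g (h (k + 1)) := by
      intro k
      by_cases hkJ : k < J
      · set j : Fin J := ⟨k, hkJ⟩ with hjdef
        have hagree : ∀ b : Fin J, b ≠ j → h (k + 1) b = h k b := by
          intro b hb
          have hbk : (b : ℕ) ≠ k := fun e => hb (Fin.ext e)
          have hiff : ((b : ℕ) < k + 1) ↔ ((b : ℕ) < k) := by omega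
          simp only [hh]
          rw [if_congr hiff rfl rfl]
        have hjk : (j : ℕ) = k := rfl
        have hkj : h k j = f s j := by
          show (if (j : ℕ) < k then f (s + 1) j else f s j) = f s j
          rw [if_neg (by omega)]
        have hk1j : h (k + 1) j = f (s + 1) j := by
          show (if (j : ℕ) < k + 1 then f (s + 1) j else f s j) = f (s + 1) j
          rw [if_pos (by omega)]
        -- identify the partial gradient at the intermediate point with Gstep
        have hgrad : gradG H S c g' j (f s j) (h k) = Gstep H S c g' f s j := by
          have hsplit : univ.filter (fun b : Fin J => b ≠ j) =
              (univ.filter (fun b => b < j)) ∪ (univ.filter (fun b => j < b)) := by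
            ext b
            simp only [Finset.mem_filter, Finset.mem_union, Finset.mem_univ, true_and]
            exact ne_iff_lt_or_gt
          have hdisj : Disjoint (univ.filter (fun b : Fin J => b < j))
              (univ.filter (fun b => j < b)) :=
            Finset.disjoint_filter.mpr fun b _ hb hb' => absurd hb' (asymm hb)
          rw [gradG, hsplit, Finset.sum_union hdisj, smul_add, Gstep]
          congr 1
          · refine congrArg _ (Finset.sum_congr rfl fun b hb => ?_)
            have hbj : b < j := (Finset.mem_filter.mp hb).2
            have : (b : ℕ) < k := hbj
            simp [hh, this]
          · refine congrArg _ (Finset.sum_congr rfl fun b hb => ?_)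
            have hbj : j < b := (Finset.mem_filter.mp hb).2
            have hbk : ¬ (b : ℕ) < k := by
              have : k < (b : ℕ) := hbj
              omega
            simp [hh, hbk]
        have hGne' : gradG H S c g' j (f s j) (h k) ≠ 0 := by
          rw [hgrad]; exact hGne s j
        have hupd' : f (s + 1) j =
            ‖gradG H S c g' j (f s j) (h k)‖⁻¹ • gradG H S c g' j (f s j) (h k) := by
          rw [hgrad]; exact hupd s j
        have hblock := block_step hpos hg hconv j (f s j) (f (s + 1) j) (h k)
          (hnorm s j) hGne' hupd'
        rw [psi_decomp hadj hsym g j (h k), psi_decomp hadj hsym g j (h (k + 1))]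
        have hA : (∑ a ∈ univ.erase j, ∑ b ∈ univ.erase j,
              if a = b then 0 else c a b * g ⟪h (k+1) a, S a b (h (k+1) b)⟫) =
            ∑ a ∈ univ.erase j, ∑ b ∈ univ.erase j,
              if a = b then 0 else c a b * g ⟪h k a, S a b (h k b)⟫ := by
          refine Finset.sum_congr rfl fun a ha => Finset.sum_congr rfl fun b hb => ?_
          rw [hagree a (Finset.ne_of_mem_erase ha), hagree b (Finset.ne_of_mem_erase hb)]
        have hB1 : (∑ b ∈ univ.erase j, c j b * g ⟪h (k+1) j, S j b (h (k+1) b)⟫) =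
            ∑ b ∈ univ.erase j, c j b * g ⟪f (s+1) j, S j b (h k b)⟫ := by
          refine Finset.sum_congr rfl fun b hb => ?_
          rw [hagree b (Finset.ne_of_mem_erase hb), hk1j]
        have hB0 : (∑ b ∈ univ.erase j, c j b * g ⟪h k j, S j b (h k b)⟫) =
            ∑ b ∈ univ.erase j, c j b * g ⟪f s j, S j b (h k b)⟫ := by
          refine Finset.sum_congr rfl fun b hb => ?_
          rw [hkj]
        rw [hA, hB1, hB0]
        linarith
      · have h1 : h k = f (s + 1) := hJfull k (le_of_not_gt hkJ)
        have h2 : h (k + 1) = f (s + 1) := hJfull (k + 1) (by omega)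
        rw [h1, h2]
    have hchain : Monotone fun k => Psi H S c g (h k) := monotone_nat_of_le_succ hstep
    have h2 : Psi H S c g (h 0) ≤ Psi H S c g (h J) := hchain (Nat.zero_le J)
    rwa [h0, hJfull J le_rfl] at h2
  -- Boundedness
  have hcont : Continuous g := continuous_iff_continuousAt.mpr fun x => (hg x).continuousAt
  set M : ℝ := ∑ p : Fin J × Fin J, ‖S p.1 p.2‖ with hM
  have hMb : ∀ a b : Fin J, ‖S a b‖ ≤ M := by
    intro a b
    exact Finset.single_le_sum (f := fun p : Fin J × Fin J => ‖S p.1 p.2‖)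
      (fun p _ => norm_nonneg _) (Finset.mem_univ (a, b))
  have hMnn : 0 ≤ M := Finset.sum_nonneg fun p _ => norm_nonneg _
  obtain ⟨z, hz, hzmax⟩ := isCompact_Icc.exists_isMaxOn
    (Set.nonempty_Icc.mpr (by linarith : -M ≤ M)) hcont.continuousOn
  set B : ℝ := ∑ a : Fin J, ∑ b : Fin J, (if a = b then (0:ℝ) else c a b * g z) with hB
  have hbound : ∀ s, Psi H S c g (f s) ≤ B := by
    intro s
    rw [Psi, hB]
    refine Finset.sum_le_sum fun a _ => Finset.sum_le_sum fun b _ => ?_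
    by_cases hab : a = b
    · simp [hab]
    · rw [if_neg hab, if_neg hab]
      refine mul_le_mul_of_nonneg_left (hzmax ?_) (hpos a b)
      rw [Set.mem_Icc, ← abs_le]
      calc |⟪f s a, S a b (f s b)⟫| ≤ ‖f s a‖ * ‖S a b (f s b)‖ := abs_real_inner_le_norm _ _
        _ ≤ 1 * (‖S a b‖ * ‖f s b‖) := by
            rw [hnorm s a]
            exact mul_le_mul_of_nonneg_left ((S a b).le_opNorm _) one_pos.le
        _ = ‖S a b‖ := by rw [hnorm s b]; ring
        _ ≤ M := hMb a b
  have hbdd : BddAbove (Set.range fun s => Psi H S c g (f s)) := by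
    refine ⟨B, ?_⟩
    rintro x ⟨s, rfl⟩
    exact hbound s
  exact ⟨hmono, hbdd, ⟨_, tendsto_atTop_ciSup hmono hbdd⟩⟩
end

section
/- (Best linear predictor / BLUP.) Assume the matrix Q = F S Fᵀ + R is invertible, and set A* = S Fᵀ Q⁻¹. Then A* minimizes the mean squared prediction error among all linear predictors: for every real M×N matrix A, E[‖ξ − A*(U − μ₀)‖²] ≤ E[‖ξ − A(U − μ₀)‖²]. -/
/-!
Orthogonality principle. With `Y = U - μ₀ = F ξ + ε` one has `E[ξ Yᵀ] = S Fᵀ` and `E[Y Yᵀ] = Q`,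
so `A* = S Fᵀ Q⁻¹` solves the normal equations `E[ξ Yᵀ] = A* E[Y Yᵀ]`: the error `ξ - A* Y` is
uncorrelated with `Y`, hence with `(A* - A) Y`. The error `ξ - A Y` is the sum of these two, and
its mean square is that of `ξ - A* Y` plus the nonnegative mean square of `(A* - A) Y`.
-/

open Matrix

namespace MeasureTheory

variable {Ω ι κ ν : Type*} [MeasurableSpace Ω] {P : Measure Ω}

/-- The matrix `E[X Yᵀ]` (uncentred). -/
noncomputable def crossMoment (P : Measure Ω) (X : Ω → ι → ℝ) (Y : Ω → κ → ℝ) : Matrix ι κ ℝ :=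
  Matrix.of fun i j => ∫ ω, X ω i * Y ω j ∂P

lemma transpose_crossMoment (X : Ω → ι → ℝ) (Y : Ω → κ → ℝ) :
    (crossMoment P X Y)ᵀ = crossMoment P Y X := by
  ext j i
  simp only [crossMoment, transpose_apply, of_apply, mul_comm]

lemma memLp_mulVec_apply [Fintype κ] {Y : Ω → κ → ℝ} (hY : ∀ j, MemLp (fun ω => Y ω j) 2 P)
    (C : Matrix ι κ ℝ) (i : ι) : MemLp (fun ω => (C *ᵥ Y ω) i) 2 P :=
  memLp_finsetSum Finset.univ fun j _ => (hY j).const_mul (C i j)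

variable {X X' : Ω → ι → ℝ} {Y Y' : Ω → κ → ℝ}

lemma integrable_mul_apply (hX : ∀ i, MemLp (fun ω => X ω i) 2 P)
    (hY : ∀ j, MemLp (fun ω => Y ω j) 2 P) (i : ι) (j : κ) :
    Integrable (fun ω => X ω i * Y ω j) P :=
  (hX i).integrable_mul (hY j)

lemma crossMoment_add_left (hX : ∀ i, MemLp (fun ω => X ω i) 2 P)
    (hX' : ∀ i, MemLp (fun ω => X' ω i) 2 P) (hY : ∀ j, MemLp (fun ω => Y ω j) 2 P) :
    crossMoment P (fun ω => X ω + X' ω) Y = crossMoment P X Y + crossMoment P X' Y := by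
  ext i j
  simp only [crossMoment, of_apply, Pi.add_apply, add_mul]
  exact integral_add (integrable_mul_apply hX hY i j) (integrable_mul_apply hX' hY i j)

lemma crossMoment_sub_left (hX : ∀ i, MemLp (fun ω => X ω i) 2 P)
    (hX' : ∀ i, MemLp (fun ω => X' ω i) 2 P) (hY : ∀ j, MemLp (fun ω => Y ω j) 2 P) :
    crossMoment P (fun ω => X ω - X' ω) Y = crossMoment P X Y - crossMoment P X' Y := by
  ext i j
  simp only [crossMoment, of_apply, Pi.sub_apply, sub_mul]
  exact integral_sub (integrable_mul_apply hX hY i j) (integrable_mul_apply hX' hY i j)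

lemma crossMoment_add_right (hX : ∀ i, MemLp (fun ω => X ω i) 2 P)
    (hY : ∀ j, MemLp (fun ω => Y ω j) 2 P) (hY' : ∀ j, MemLp (fun ω => Y' ω j) 2 P) :
    crossMoment P X (fun ω => Y ω + Y' ω) = crossMoment P X Y + crossMoment P X Y' := by
  rw [← transpose_crossMoment, crossMoment_add_left hY hY' hX, transpose_add,
    transpose_crossMoment, transpose_crossMoment]

lemma crossMoment_mulVec_left [Fintype ι] (hX : ∀ i, MemLp (fun ω => X ω i) 2 P)
    (hY : ∀ j, MemLp (fun ω => Y ω j) 2 P) (C : Matrix ν ι ℝ) :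
    crossMoment P (fun ω => C *ᵥ X ω) Y = C * crossMoment P X Y := by
  ext k j
  simp only [crossMoment, of_apply, mul_apply, mulVec, dotProduct, Finset.sum_mul, mul_assoc]
  rw [integral_finsetSum _ fun i _ => (integrable_mul_apply hX hY i j).const_mul (C k i)]
  simp only [integral_const_mul]

lemma crossMoment_mulVec_right [Fintype κ] (hX : ∀ i, MemLp (fun ω => X ω i) 2 P)
    (hY : ∀ j, MemLp (fun ω => Y ω j) 2 P) (C : Matrix ν κ ℝ) :
    crossMoment P X (fun ω => C *ᵥ Y ω) = crossMoment P X Y * Cᵀ := by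
  rw [← transpose_crossMoment, crossMoment_mulVec_left hY hX, transpose_mul,
    transpose_crossMoment]

lemma integral_sum_sq_le_of_trace_crossMoment_eq_zero [Fintype ι] {E Z : Ω → ι → ℝ}
    (hE : ∀ i, MemLp (fun ω => E ω i) 2 P) (hZ : ∀ i, MemLp (fun ω => Z ω i) 2 P)
    (horth : (crossMoment P E Z).trace = 0) :
    ∫ ω, ∑ i, E ω i ^ 2 ∂P ≤ ∫ ω, ∑ i, (E ω i + Z ω i) ^ 2 ∂P := by
  have hEZ_int : Integrable (fun ω => ∑ i, E ω i * Z ω i) P :=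
    integrable_finsetSum _ fun i _ => integrable_mul_apply hE hZ i i
  have hEZ : ∫ ω, ∑ i, E ω i * Z ω i ∂P = 0 := by
    rw [integral_finsetSum _ fun i _ => integrable_mul_apply hE hZ i i]
    exact horth
  have hE2 : Integrable (fun ω => ∑ i, E ω i ^ 2) P :=
    integrable_finsetSum _ fun i _ => (hE i).integrable_sq
  calc ∫ ω, ∑ i, E ω i ^ 2 ∂P
      = ∫ ω, ∑ i, E ω i ^ 2 ∂P + 2 * ∫ ω, ∑ i, E ω i * Z ω i ∂P := by
        rw [hEZ, mul_zero, add_zero]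
    _ = ∫ ω, (∑ i, E ω i ^ 2 + 2 * ∑ i, E ω i * Z ω i) ∂P := by
      rw [integral_add hE2 (hEZ_int.const_mul 2), integral_const_mul]
    _ ≤ ∫ ω, ∑ i, (E ω i + Z ω i) ^ 2 ∂P := by
      refine integral_mono (hE2.add (hEZ_int.const_mul 2)) ?_ fun ω => ?_
      · exact integrable_finsetSum _ fun i _ => ((hE i).add (hZ i)).integrable_sq
      · rw [Finset.mul_sum, ← Finset.sum_add_distrib]
        exact Finset.sum_le_sum fun i _ => by nlinarith [sq_nonneg (Z ω i)]

theorem integral_sum_sq_sub_mulVec_le_of_crossMoment_eq [Fintype ι] [Fintype κ]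
    (hX : ∀ i, MemLp (fun ω => X ω i) 2 P) (hY : ∀ j, MemLp (fun ω => Y ω j) 2 P)
    {B : Matrix ι κ ℝ} (hB : crossMoment P X Y = B * crossMoment P Y Y) (A : Matrix ι κ ℝ) :
    ∫ ω, ∑ i, (X ω i - (B *ᵥ Y ω) i) ^ 2 ∂P ≤ ∫ ω, ∑ i, (X ω i - (A *ᵥ Y ω) i) ^ 2 ∂P := by
  have hBY := memLp_mulVec_apply hY B
  have hE : ∀ i, MemLp (fun ω => X ω i - (B *ᵥ Y ω) i) 2 P := fun i => (hX i).sub (hBY i)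
  have horth : crossMoment P (fun ω i => X ω i - (B *ᵥ Y ω) i) Y = 0 :=
    calc _ = crossMoment P X Y - crossMoment P (fun ω => B *ᵥ Y ω) Y :=
          crossMoment_sub_left hX hBY hY
      _ = 0 := by rw [crossMoment_mulVec_left hY hY, hB, sub_self]
  have hsplit : ∀ ω i, X ω i - (A *ᵥ Y ω) i = (X ω i - (B *ᵥ Y ω) i) + ((B - A) *ᵥ Y ω) i := by
    intro ω i
    rw [sub_mulVec, Pi.sub_apply]
    ring
  simp only [hsplit]
  refine integral_sum_sq_le_of_trace_crossMoment_eq_zero hE (memLp_mulVec_apply hY (B - A)) ?_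
  rw [crossMoment_mulVec_right hE hY, horth, Matrix.zero_mul, trace_zero]

section LinearObservation

variable [Fintype ι] {ξ : Ω → ι → ℝ} {ε : Ω → κ → ℝ}

lemma memLp_mulVec_add_apply (hξ : ∀ i, MemLp (fun ω => ξ ω i) 2 P)
    (hε : ∀ j, MemLp (fun ω => ε ω j) 2 P) (F : Matrix κ ι ℝ) (j : κ) :
    MemLp (fun ω => (F *ᵥ ξ ω + ε ω) j) 2 P :=
  (memLp_mulVec_apply hξ F j).add (hε j)

lemma crossMoment_mulVec_add_right (hξ : ∀ i, MemLp (fun ω => ξ ω i) 2 P)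
    (hε : ∀ j, MemLp (fun ω => ε ω j) 2 P) (hξε : crossMoment P ξ ε = 0) (F : Matrix κ ι ℝ) :
    crossMoment P ξ (fun ω => F *ᵥ ξ ω + ε ω) = crossMoment P ξ ξ * Fᵀ := by
  rw [crossMoment_add_right hξ (memLp_mulVec_apply hξ F) hε, crossMoment_mulVec_right hξ hξ,
    hξε, add_zero]

lemma crossMoment_mulVec_add_self (hξ : ∀ i, MemLp (fun ω => ξ ω i) 2 P)
    (hε : ∀ j, MemLp (fun ω => ε ω j) 2 P) (hξε : crossMoment P ξ ε = 0) (F : Matrix κ ι ℝ) :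
    crossMoment P (fun ω => F *ᵥ ξ ω + ε ω) (fun ω => F *ᵥ ξ ω + ε ω) =
      F * crossMoment P ξ ξ * Fᵀ + crossMoment P ε ε := by
  have hFξ := memLp_mulVec_apply hξ F
  have hεξ : crossMoment P ε ξ = 0 := by rw [← transpose_crossMoment, hξε, transpose_zero]
  have hY := memLp_mulVec_add_apply hξ hε F
  rw [crossMoment_add_left hFξ hε hY, crossMoment_mulVec_left hξ hY,
    crossMoment_mulVec_add_right hξ hε hξε, crossMoment_add_right hε hFξ hε,
    crossMoment_mulVec_right hε hξ, hεξ, Matrix.zero_mul, zero_add, Matrix.mul_assoc]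

end LinearObservation

end MeasureTheory

open MeasureTheory

theorem stmt12_general (Ω : Type*)
    [MeasurableSpace Ω] (P : MeasureTheory.Measure Ω)
    (M N : ℕ) (ξ : Ω → Fin M → ℝ) (ε : Ω → Fin N → ℝ)
    (hξ2 : ∀ a : Fin M, MeasureTheory.MemLp (fun ω => ξ ω a) 2 P)
    (hε2 : ∀ b : Fin N, MeasureTheory.MemLp (fun ω => ε ω b) 2 P)
    (S : Matrix (Fin M) (Fin M) ℝ) (hS : ∀ a b : Fin M, (∫ ω, ξ ω a * ξ ω b ∂P) = S a b)
    (R : Matrix (Fin N) (Fin N) ℝ) (hR : ∀ a b : Fin N, (∫ ω, ε ω a * ε ω b ∂P) = R a b)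
    (hcross : ∀ (a : Fin M) (b : Fin N), (∫ ω, ξ ω a * ε ω b ∂P) = 0)
    (F : Matrix (Fin N) (Fin M) ℝ) (μ₀ : Fin N → ℝ) (U : Ω → Fin N → ℝ)
    (hU : ∀ ω, U ω = μ₀ + F.mulVec (ξ ω) + ε ω)
    (hQ : IsUnit (F * S * Fᵀ + R)) :
    ∀ A : Matrix (Fin M) (Fin N) ℝ,
      (∫ ω, ∑ a : Fin M,
          (ξ ω a - (S * Fᵀ * (F * S * Fᵀ + R)⁻¹).mulVec (fun b => U ω b - μ₀ b) a) ^ 2 ∂P) ≤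
        (∫ ω, ∑ a : Fin M, (ξ ω a - A.mulVec (fun b => U ω b - μ₀ b) a) ^ 2 ∂P) := by
  intro A
  have hY : ∀ ω, U ω - μ₀ = F *ᵥ ξ ω + ε ω := fun ω => by
    rw [hU, add_assoc, add_sub_cancel_left]
  simp only [← Pi.sub_apply, hY]
  have hξξ : crossMoment P ξ ξ = S := Matrix.ext hS
  have hεε : crossMoment P ε ε = R := Matrix.ext hR
  have hξε : crossMoment P ξ ε = 0 := Matrix.ext hcross
  refine integral_sum_sq_sub_mulVec_le_of_crossMoment_eq hξ2
    (memLp_mulVec_add_apply hξ2 hε2 F) ?_ A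
  rw [crossMoment_mulVec_add_right hξ2 hε2 hξε, crossMoment_mulVec_add_self hξ2 hε2 hξε,
    hξξ, hεε, nonsing_inv_mul_cancel_right _ _ ((isUnit_iff_isUnit_det _).mp hQ)]

theorem stmt12 (Ω : Type*)
    [MeasurableSpace Ω] (P : MeasureTheory.Measure Ω) [MeasureTheory.IsProbabilityMeasure P]
    (M N : ℕ) (ξ : Ω → Fin M → ℝ) (ε : Ω → Fin N → ℝ)
    (hξ2 : ∀ a : Fin M, MeasureTheory.MemLp (fun ω => ξ ω a) 2 P)
    (hε2 : ∀ b : Fin N, MeasureTheory.MemLp (fun ω => ε ω b) 2 P)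
    (hξ0 : ∀ a : Fin M, (∫ ω, ξ ω a ∂P) = 0)
    (hε0 : ∀ b : Fin N, (∫ ω, ε ω b ∂P) = 0)
    (S : Matrix (Fin M) (Fin M) ℝ) (hS : ∀ a b : Fin M, (∫ ω, ξ ω a * ξ ω b ∂P) = S a b)
    (R : Matrix (Fin N) (Fin N) ℝ) (hR : ∀ a b : Fin N, (∫ ω, ε ω a * ε ω b ∂P) = R a b)
    (hcross : ∀ (a : Fin M) (b : Fin N), (∫ ω, ξ ω a * ε ω b ∂P) = 0)
    (F : Matrix (Fin N) (Fin M) ℝ) (μ₀ : Fin N → ℝ) (U : Ω → Fin N → ℝ)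
    (hU : ∀ ω, U ω = μ₀ + F.mulVec (ξ ω) + ε ω)
    (hSpsd : S.PosSemidef) (hRpsd : R.PosSemidef)
    (hQ : IsUnit (F * S * Fᵀ + R)) :
    ∀ A : Matrix (Fin M) (Fin N) ℝ,
      (∫ ω, ∑ a : Fin M,
          (ξ ω a - (S * Fᵀ * (F * S * Fᵀ + R)⁻¹).mulVec (fun b => U ω b - μ₀ b) a) ^ 2 ∂P) ≤
        (∫ ω, ∑ a : Fin M, (ξ ω a - A.mulVec (fun b => U ω b - μ₀ b) a) ^ 2 ∂P) :=
  stmt12_general Ω P M N ξ ε hξ2 hε2 S hS R hR hcross F μ₀ U hU hQ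
end

section
/- (Uncorrelated-components deflation of cross-covariance operators.) Let f ∈ H with ⟨f, Σ_X f⟩ ≠ 0 and f' ∈ K with ⟨f', Σ_Y f'⟩ ≠ 0, and set d = ⟨f, Σ_X f⟩⁻¹ and d' = ⟨f', Σ_Y f'⟩⁻¹. Define the deflated random elements X'(ω) = X(ω) − d·⟨f, X(ω)⟩ · (Σ_X f) and Y'(ω) = Y(ω) − d'·⟨f', Y(ω)⟩ · (Σ_Y f'). Then for every g ∈ K the deflated cross-covariance operator Σ' g = ∫ ⟨Y'(ω), g⟩ · X'(ω) dP(ω) satisfies Σ' g = (I_H − d·Σ_X∘(f⊗f)) ( Σ( (I_K − d'·(f'⊗f')∘Σ_Y) g ) ), where (f⊗f)(x) = ⟨f, x⟩ · f and (f'⊗f')(y) = ⟨f', y⟩ · f'. -/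
open scoped RealInnerProductSpace
open MeasureTheory

lemma auxInt13 {Ω : Type*} [MeasurableSpace Ω] {P : Measure Ω}
    {H K : Type*} [NormedAddCommGroup H] [InnerProductSpace ℝ H]
    [NormedAddCommGroup K] [InnerProductSpace ℝ K]
    {X : Ω → H} {Y : Ω → K}
    (hXm : AEStronglyMeasurable X P) (hYm : AEStronglyMeasurable Y P)
    (hX2 : Integrable (fun ω => ‖X ω‖ ^ 2) P) (hY2 : Integrable (fun ω => ‖Y ω‖ ^ 2) P)
    (g : K) : Integrable (fun ω => ⟪Y ω, g⟫ • X ω) P := by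
  apply Integrable.mono' (((hY2.add hX2).const_mul ‖g‖).div_const 2)
  · exact (hYm.inner aestronglyMeasurable_const).smul hXm
  · filter_upwards with ω
    have h1 : |⟪Y ω, g⟫| ≤ ‖Y ω‖ * ‖g‖ := abs_real_inner_le_norm _ _
    rw [norm_smul, Real.norm_eq_abs]
    have h2 : ‖Y ω‖ * ‖X ω‖ ≤ (‖Y ω‖ ^ 2 + ‖X ω‖ ^ 2) / 2 := by nlinarith [sq_nonneg (‖Y ω‖ - ‖X ω‖)]
    have h3 : (0:ℝ) ≤ ‖X ω‖ := norm_nonneg _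
    have h4 : (0:ℝ) ≤ ‖g‖ := norm_nonneg _
    calc |⟪Y ω, g⟫| * ‖X ω‖ ≤ (‖Y ω‖ * ‖g‖) * ‖X ω‖ := by
          exact mul_le_mul_of_nonneg_right h1 h3
      _ = ‖g‖ * (‖Y ω‖ * ‖X ω‖) := by ring
      _ ≤ ‖g‖ * ((‖Y ω‖ ^ 2 + ‖X ω‖ ^ 2) / 2) := by
          exact mul_le_mul_of_nonneg_left h2 h4
      _ = ‖g‖ * (‖Y ω‖ ^ 2 + ‖X ω‖ ^ 2) / 2 := by ring

theorem stmt13 (Ω : Type*) [MeasurableSpace Ω] (P : Measure Ω) [IsProbabilityMeasure P]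
    (H K : Type*) [NormedAddCommGroup H] [InnerProductSpace ℝ H] [CompleteSpace H]
    [NormedAddCommGroup K] [InnerProductSpace ℝ K] [CompleteSpace K]
    (X : Ω → H) (Y : Ω → K)
    (hXm : StronglyMeasurable X) (hYm : StronglyMeasurable Y)
    (hX2 : Integrable (fun ω => ‖X ω‖ ^ 2) P) (hY2 : Integrable (fun ω => ‖Y ω‖ ^ 2) P)
    -- the cross-covariance operator Σ : K → H
    (Sg : K → H) (hSg : ∀ k : K, Sg k = ∫ ω, ⟪Y ω, k⟫ • X ω ∂P)
    -- the covariance operators Σ_X : H → H and Σ_Y : K → K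
    (SX : H → H) (hSX : ∀ h : H, SX h = ∫ ω, ⟪X ω, h⟫ • X ω ∂P)
    (SY : K → K) (hSY : ∀ k : K, SY k = ∫ ω, ⟪Y ω, k⟫ • Y ω ∂P)
    (f : H) (f' : K) (hf : ⟪f, SX f⟫ ≠ 0) (hf' : ⟪f', SY f'⟫ ≠ 0)
    (d d' : ℝ) (hd : d = ⟪f, SX f⟫⁻¹) (hd' : d' = ⟪f', SY f'⟫⁻¹)
    (X' : Ω → H) (hX' : ∀ ω, X' ω = X ω - (d * ⟪f, X ω⟫) • SX f)
    (Y' : Ω → K) (hY' : ∀ ω, Y' ω = Y ω - (d' * ⟪f', Y ω⟫) • SY f') :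
    ∀ g : K,
      (∫ ω, ⟪Y' ω, g⟫ • X' ω ∂P) =
        Sg (g - d' • ⟪f', SY g⟫ • f') -
          d • ⟪f, Sg (g - d' • ⟪f', SY g⟫ • f')⟫ • SX f := by
  intro g
  have hXm' := (hXm.aestronglyMeasurable : AEStronglyMeasurable X P)
  have hYm' := (hYm.aestronglyMeasurable : AEStronglyMeasurable Y P)
  -- symmetry of SY
  have hIntYY : ∀ v : K, Integrable (fun ω => ⟪Y ω, v⟫ • Y ω) P :=
    fun v => auxInt13 hYm' hYm' hY2 hY2 v
  have hsym : ⟪f', SY g⟫ = ⟪SY f', g⟫ := by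
    have e1 : ⟪f', SY g⟫ = ∫ ω, ⟪Y ω, g⟫ * ⟪f', Y ω⟫ ∂P := by
      rw [hSY g, ← integral_inner (hIntYY g) f']
      congr 1; funext ω; rw [real_inner_smul_right]
    have e2 : ⟪SY f', g⟫ = ∫ ω, ⟪Y ω, f'⟫ * ⟪g, Y ω⟫ ∂P := by
      rw [real_inner_comm, hSY f', ← integral_inner (hIntYY f') g]
      congr 1; funext ω; rw [real_inner_smul_right]
    rw [e1, e2]
    congr 1; funext ω
    rw [real_inner_comm f' (Y ω), real_inner_comm g (Y ω)]
    ring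
  set g' : K := g - d' • ⟪f', SY g⟫ • f' with hg'
  -- the deflated Y inner product equals the inner product against g'
  have hYg : ∀ ω, ⟪Y' ω, g⟫ = ⟪Y ω, g'⟫ := by
    intro ω
    rw [hY' ω, hg']
    simp only [inner_sub_left, inner_sub_right, real_inner_smul_left, real_inner_smul_right]
    rw [hsym, real_inner_comm f' (Y ω)]
    ring
  -- integrability facts
  have Int1 : Integrable (fun ω => ⟪Y ω, g'⟫ • X ω) P := auxInt13 hXm' hYm' hX2 hY2 g'
  have hfX2 : Integrable (fun ω => ‖⟪f, X ω⟫‖ ^ 2) P := by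
    apply Integrable.mono' (hX2.const_mul (‖f‖ ^ 2))
    · exact ((aestronglyMeasurable_const.inner hXm').norm.pow 2)
    · filter_upwards with ω
      have h1 : |⟪f, X ω⟫| ≤ ‖f‖ * ‖X ω‖ := abs_real_inner_le_norm _ _
      have : ‖⟪f, X ω⟫‖ ^ 2 ≤ (‖f‖ * ‖X ω‖) ^ 2 := by
        rw [Real.norm_eq_abs]
        exact pow_le_pow_left₀ (abs_nonneg _) h1 2
      rw [Real.norm_eq_abs, abs_of_nonneg (by positivity)]
      calc |⟪f, X ω⟫| ^ 2 ≤ (‖f‖ * ‖X ω‖) ^ 2 := this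
        _ = ‖f‖ ^ 2 * ‖X ω‖ ^ 2 := by ring
  have Int2 : Integrable (fun ω => ⟪Y ω, g'⟫ * ⟪f, X ω⟫) P := by
    have := auxInt13 (X := fun ω => ⟪f, X ω⟫) (aestronglyMeasurable_const.inner hXm') hYm'
      hfX2 hY2 g'
    simpa [smul_eq_mul] using this
  -- main computation
  have hSgg' : Sg g' = ∫ ω, ⟪Y ω, g'⟫ • X ω ∂P := hSg g'
  have hfSg : ⟪f, Sg g'⟫ = ∫ ω, ⟪Y ω, g'⟫ * ⟪f, X ω⟫ ∂P := by
    rw [hSgg', ← integral_inner Int1 f]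
    congr 1; funext ω
    rw [real_inner_smul_right]
  have hpt : ∀ ω, ⟪Y' ω, g⟫ • X' ω
      = ⟪Y ω, g'⟫ • X ω - (d * (⟪Y ω, g'⟫ * ⟪f, X ω⟫)) • SX f := by
    intro ω
    rw [hX' ω, hYg ω, smul_sub, smul_smul]
    congr 2
    ring
  calc (∫ ω, ⟪Y' ω, g⟫ • X' ω ∂P)
      = ∫ ω, (⟪Y ω, g'⟫ • X ω - (d * (⟪Y ω, g'⟫ * ⟪f, X ω⟫)) • SX f) ∂P := by
        congr 1; funext ω; exact hpt ω
    _ = (∫ ω, ⟪Y ω, g'⟫ • X ω ∂P) - ∫ ω, (d * (⟪Y ω, g'⟫ * ⟪f, X ω⟫)) • SX f ∂P := by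
        exact integral_sub Int1 ((Int2.const_mul d).smul_const (SX f))
    _ = Sg g' - (∫ ω, d * (⟪Y ω, g'⟫ * ⟪f, X ω⟫) ∂P) • SX f := by
        rw [hSgg', integral_smul_const]
    _ = Sg g' - d • ⟪f, Sg g'⟫ • SX f := by
        rw [hfSg, integral_const_mul, smul_smul]
end
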